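/- For every integer l ≥ 1, the numbers a(m) = Σ_{b=0}^{⌊m/2⌋} C(m,2b)·(2b)!/b! satisfy the three-term recurrence a(2l+3) + 4·(2l+1)·(2l)·a(2l−1) = (8l+7)·a(2l+1). -/
import Mathlib


/-- `aSeq m = Σ_{b=0}^{⌊m/2⌋} C(m,2b)·(2b)!/b!`. -/
def aSeq (m : ℕ) : ℕ :=
  ∑ b ∈ Finset.range (m / 2 + 1), Nat.choose m (2 * b) * (Nat.factorial (2 * b) / Nat.factorial b)

/-- The exact quotient `(2b)!/b!`. -/
def cSeq (b : ℕ) : ℕ := Nat.factorial (2 * b) / Nat.factorial b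

lemma cSeq_succ (b : ℕ) : cSeq (b + 1) = 2 * (2 * b + 1) * cSeq b := by
  obtain ⟨k, hk⟩ := Nat.factorial_dvd_factorial (show b ≤ 2 * b by omega)
  have h1 : cSeq b = k := by
    rw [cSeq, hk, Nat.mul_div_cancel_left _ (Nat.factorial_pos b)]
  have h2 : Nat.factorial (2 * (b + 1)) = Nat.factorial (b + 1) * (2 * (2 * b + 1) * k) := by
    have : 2 * (b + 1) = (2 * b + 1) + 1 := by ring
    rw [this, Nat.factorial_succ, Nat.factorial_succ, hk, Nat.factorial_succ]
    ring
  rw [cSeq, h2, Nat.mul_div_cancel_left _ (Nat.factorial_pos (b + 1)), h1]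

lemma aSeq_ext (m N : ℕ) (hN : m / 2 + 1 ≤ N) :
    aSeq m = ∑ b ∈ Finset.range N, Nat.choose m (2 * b) * cSeq b := by
  rw [aSeq]
  refine Finset.sum_subset (Finset.range_subset_range.mpr hN) ?_
  intro b _ hb
  simp only [Finset.mem_range, not_lt] at hb
  have : m < 2 * b := by omega
  rw [Nat.choose_eq_zero_of_lt this, zero_mul]

lemma aSeq_rec (m : ℕ) : aSeq (m + 2) = aSeq (m + 1) + 2 * (m + 1) * aSeq m := by
  have hN : (m + 2) / 2 + 1 = (m / 2 + 1) + 1 := by omega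
  rw [aSeq, hN, Finset.sum_range_succ']
  simp only [mul_zero, Nat.choose_zero_right, one_mul, Nat.factorial_zero, Nat.div_one]
  have hterm : ∀ b ∈ Finset.range (m / 2 + 1),
      Nat.choose (m + 2) (2 * (b + 1)) * (Nat.factorial (2 * (b + 1)) / Nat.factorial (b + 1))
        = 2 * (m + 1) * (Nat.choose m (2 * b) * cSeq b)
          + Nat.choose (m + 1) (2 * (b + 1)) * (Nat.factorial (2 * (b + 1)) / Nat.factorial (b + 1)) := by
    intro b _
    have hp : Nat.choose (m + 2) (2 * (b + 1)) =
        Nat.choose (m + 1) (2 * b + 1) + Nat.choose (m + 1) (2 * (b + 1)) := by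
      have h2 : 2 * (b + 1) = (2 * b + 1) + 1 := by ring
      rw [h2, Nat.choose_succ_succ']
    have hc : Nat.factorial (2 * (b + 1)) / Nat.factorial (b + 1) = 2 * (2 * b + 1) * cSeq b :=
      cSeq_succ b
    have hmc : Nat.choose (m + 1) (2 * b + 1) * (2 * b + 1) = (m + 1) * Nat.choose m (2 * b) := by
      rw [← Nat.add_one_mul_choose_eq]
    rw [hp, hc, add_mul]
    have : Nat.choose (m + 1) (2 * b + 1) * (2 * (2 * b + 1) * cSeq b)
        = 2 * (m + 1) * (Nat.choose m (2 * b) * cSeq b) := by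
      calc Nat.choose (m + 1) (2 * b + 1) * (2 * (2 * b + 1) * cSeq b)
          = 2 * (Nat.choose (m + 1) (2 * b + 1) * (2 * b + 1)) * cSeq b := by ring
        _ = 2 * ((m + 1) * Nat.choose m (2 * b)) * cSeq b := by rw [hmc]
        _ = 2 * (m + 1) * (Nat.choose m (2 * b) * cSeq b) := by ring
    rw [this]
  rw [Finset.sum_congr rfl hterm, Finset.sum_add_distrib, ← Finset.mul_sum]
  have h1 : aSeq m = ∑ b ∈ Finset.range (m / 2 + 1), Nat.choose m (2 * b) * cSeq b :=
    aSeq_ext m _ le_rfl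
  have h2 : aSeq (m + 1) = (∑ b ∈ Finset.range (m / 2 + 1),
      Nat.choose (m + 1) (2 * (b + 1)) * (Nat.factorial (2 * (b + 1)) / Nat.factorial (b + 1)))
        + 1 := by
    rw [aSeq_ext (m + 1) (m / 2 + 2) (by omega), Finset.sum_range_succ']
    simp [cSeq]
  rw [← h1]
  omega

theorem aSeq_odd_recurrence (l : ℕ) (hl : 1 ≤ l) :
    aSeq (2 * l + 3) + 4 * (2 * l + 1) * (2 * l) * aSeq (2 * l - 1)
      = (8 * l + 7) * aSeq (2 * l + 1) := by
  have e1 : aSeq (2 * l + 3) = aSeq (2 * l + 2) + 2 * (2 * l + 2) * aSeq (2 * l + 1) :=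
    aSeq_rec (2 * l + 1)
  have e2 : aSeq (2 * l + 2) = aSeq (2 * l + 1) + 2 * (2 * l + 1) * aSeq (2 * l) :=
    aSeq_rec (2 * l)
  have e3 : aSeq (2 * l + 1) = aSeq (2 * l) + 2 * (2 * l) * aSeq (2 * l - 1) := by
    have h := aSeq_rec (2 * l - 1)
    have h1 : 2 * l - 1 + 2 = 2 * l + 1 := by omega
    have h2 : 2 * l - 1 + 1 = 2 * l := by omega
    rw [h1, h2] at h
    exact h
  rw [e1, e2, e3]
  ring
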